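/- arXiv:math/0611418 — 3 statements merged into one kernel-verified Lean document; each statement's English description precedes it below -/
import Mathlib

section
/- In the common belief model with measures μ_N on [-1,1], if μ̄_N = ∫|ζ|dμ_N(ζ) ≥ C·N^{ε-1/2} for some C, ε > 0 and all large N, then E_{μ_N}[|Σ_{i=1}^N X_i|] / (N·μ̄_N) → 1 as N → ∞. -/
/-!
Conditionally on `Z = ζ` the votes are i.i.d. with mean `ζ`, so `S = ∑ Xᵢ` has conditional
mean `Nζ` and conditional variance `N(1 - ζ²) ≤ N`. By Jensen, `E[|S| | Z = ζ]` is within `√N`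
of `N|ζ|`; integrating over `ζ`, `E|S|` is within `√N` of `N μ̄_N`. The lower bound on `μ̄_N`
gives `√N μ̄_N ≥ C N^ε → ∞`, so this error is negligible against `N μ̄_N`.
-/

open MeasureTheory Filter Set

theorem integral_eq_sum_of_sum_measureReal_singleton {α E : Type*} [MeasurableSpace α]
    [MeasurableSingletonClass α] [NormedAddCommGroup E] [NormedSpace ℝ E] [CompleteSpace E]
    {P : Measure α} [IsProbabilityMeasure P] {s : Finset α}
    (hs : ∑ x ∈ s, P.real {x} = 1) (f : α → E) :
    ∫ x, f x ∂P = ∑ x ∈ s, P.real {x} • f x := by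
  have hfull : P s = P univ := by
    rw [sum_measureReal_singleton, measureReal_def, ENNReal.toReal_eq_one_iff] at hs
    rw [hs, measure_univ]
  have hae : ∀ᵐ x ∂P, x ∈ (s : Set α) :=
    (ae_mem_iff_measure_eq s.measurableSet.nullMeasurableSet).2 hfull
  calc ∫ x, f x ∂P = ∫ x in s, f x ∂P := by rw [Measure.restrict_eq_self_of_ae_mem hae]
    _ = ∑ x ∈ s, P.real {x} • f x := setIntegral_finset _ IntegrableOn.finset

theorem Continuous.integrable_of_ae_mem_Icc {E : Type*} [NormedAddCommGroup E]
    {μ : Measure ℝ} [IsFiniteMeasure μ] {a b : ℝ} (hμ : ∀ᵐ ζ ∂μ, ζ ∈ Icc a b) {f : ℝ → E}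
    (hf : Continuous f) : Integrable f μ := by
  rw [← Measure.restrict_eq_self_of_ae_mem hμ]
  exact hf.integrableOn_Icc

theorem sum_abs_mul_le_sqrt_sum_sq_mul {ι : Type*} {s : Finset ι} {w f : ι → ℝ}
    (hw₀ : ∀ x ∈ s, 0 ≤ w x) (hw₁ : ∑ x ∈ s, w x = 1) :
    ∑ x ∈ s, |f x| * w x ≤ √(∑ x ∈ s, f x ^ 2 * w x) := by
  have jensen : (∑ x ∈ s, w x • |f x|) ^ 2 ≤ ∑ x ∈ s, w x • |f x| ^ 2 :=
    (Even.convexOn_pow (𝕜 := ℝ) even_two).map_sum_le (β := ℝ) hw₀ hw₁ fun _ _ => mem_univ _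
  simp only [smul_eq_mul, sq_abs] at jensen
  refine Real.le_sqrt_of_sq_le ?_
  simpa only [mul_comm (w _)] using jensen

theorem tendsto_div_nhds_one_of_abs_sub_le {α : Type*} {l : Filter α}
    {a b e : α → ℝ} (hab : ∀ᶠ x in l, |a x - b x| ≤ e x) (hb : ∀ᶠ x in l, 0 < b x)
    (he : Tendsto (fun x => e x / b x) l (nhds 0)) :
    Tendsto (fun x => a x / b x) l (nhds 1) := by
  have hdiff : Tendsto (fun x => a x / b x - 1) l (nhds 0) := by
    refine squeeze_zero_norm' ?_ he
    filter_upwards [hab, hb] with x hx hbx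
    rw [Real.norm_eq_abs, div_sub_one hbx.ne', abs_div, abs_of_pos hbx]
    gcongr
  simpa using hdiff.add_const 1

namespace CommonBelief

noncomputable def cube (N : ℕ) : Finset (Fin N → ℝ) :=
  Fintype.piFinset fun _ => {1, -1}

theorem mem_cube {N : ℕ} {ξ : Fin N → ℝ} : ξ ∈ cube N ↔ ∀ i, ξ i = 1 ∨ ξ i = -1 := by
  simp [cube]

noncomputable def voteProb (ζ s : ℝ) : ℝ :=
  if s = 1 then (1 + ζ) / 2 else (1 - ζ) / 2

/-- The conditional probability of the vote profile `ξ ∈ cube N` given `Z = ζ`. -/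
noncomputable def weight (N : ℕ) (ζ : ℝ) (ξ : Fin N → ℝ) : ℝ :=
  ∏ i, voteProb ζ (ξ i)

variable {N : ℕ} {ζ : ℝ}

@[simp] theorem voteProb_one (ζ : ℝ) : voteProb ζ 1 = (1 + ζ) / 2 := if_pos rfl

@[simp] theorem voteProb_neg_one (ζ : ℝ) : voteProb ζ (-1) = (1 - ζ) / 2 :=
  if_neg (by norm_num)

theorem weight_nonneg (hζ : ζ ∈ Icc (-1 : ℝ) 1) (ξ : Fin N → ℝ) : 0 ≤ weight N ζ ξ :=
  Finset.prod_nonneg fun i _ => by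
    unfold voteProb
    split_ifs <;> linarith [hζ.1, hζ.2]

theorem continuous_weight (ξ : Fin N → ℝ) : Continuous fun ζ => weight N ζ ξ :=
  continuous_finsetProd _ fun i _ => by
    unfold voteProb
    split_ifs <;> fun_prop

/-- Conditional independence of the votes given `Z = ζ`. -/
theorem sum_prod_mul_weight (ζ : ℝ) (f : Fin N → ℝ → ℝ) :
    ∑ ξ ∈ cube N, (∏ j, f j (ξ j)) * weight N ζ ξ
      = ∏ j, (f j 1 * voteProb ζ 1 + f j (-1) * voteProb ζ (-1)) := by
  simp only [weight, ← Finset.prod_mul_distrib, cube]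
  rw [← Finset.prod_univ_sum (fun _ => ({1, -1} : Finset ℝ)) fun j s => f j s * voteProb ζ s]
  exact Finset.prod_congr rfl fun j _ => Finset.sum_pair (by norm_num)

theorem sum_weight (N : ℕ) (ζ : ℝ) : ∑ ξ ∈ cube N, weight N ζ ξ = 1 := by
  have h := sum_prod_mul_weight (N := N) ζ fun _ _ => 1
  simp only [Finset.prod_const_one, one_mul] at h
  rw [h]
  refine Finset.prod_eq_one fun _ _ => ?_
  simp only [voteProb_one, voteProb_neg_one]
  ring

theorem sum_centered_mul_centered_mul_weight (ζ : ℝ) (k l : Fin N) :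
    ∑ ξ ∈ cube N, (ξ k - ζ) * (ξ l - ζ) * weight N ζ ξ = if k = l then 1 - ζ ^ 2 else 0 := by
  have hprod : ∀ ξ : Fin N → ℝ, (ξ k - ζ) * (ξ l - ζ)
      = ∏ j, (if j = k then ξ j - ζ else 1) * (if j = l then ξ j - ζ else 1) := by
    intro ξ
    rw [Finset.prod_mul_distrib, Finset.prod_ite_eq', Finset.prod_ite_eq']
    simp
  have h := sum_prod_mul_weight ζ fun j s =>
    (if j = k then s - ζ else 1) * (if j = l then s - ζ else 1)
  simp only [← hprod] at h
  rw [h]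
  split_ifs with hkl
  · subst hkl
    calc _ = ∏ j, if j = k then 1 - ζ ^ 2 else 1 := Finset.prod_congr rfl fun j _ => by
            simp only [voteProb_one, voteProb_neg_one]
            split_ifs <;> ring
      _ = 1 - ζ ^ 2 := by simp
  · refine Finset.prod_eq_zero (Finset.mem_univ k) ?_
    simp only [if_true, hkl, if_false, voteProb_one, voteProb_neg_one]
    ring

theorem sum_sq_sub_mul_weight (N : ℕ) (ζ : ℝ) :
    ∑ ξ ∈ cube N, (∑ i, ξ i - N * ζ) ^ 2 * weight N ζ ξ = N * (1 - ζ ^ 2) := by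
  have hexpand : ∀ ξ : Fin N → ℝ, (∑ i, ξ i - N * ζ) ^ 2 * weight N ζ ξ
      = ∑ k, ∑ l, (ξ k - ζ) * (ξ l - ζ) * weight N ζ ξ := by
    intro ξ
    have hcenter : ∑ i, ξ i - N * ζ = ∑ i, (ξ i - ζ) := by simp [Finset.sum_sub_distrib]
    rw [hcenter, sq, Finset.sum_mul_sum, Finset.sum_mul]
    simp only [Finset.sum_mul]
  simp only [hexpand]
  rw [Finset.sum_comm]
  simp only [Finset.sum_comm (s := cube N), sum_centered_mul_centered_mul_weight,
    Finset.sum_ite_eq, Finset.mem_univ, if_true, Finset.sum_const, Finset.card_univ,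
    Fintype.card_fin, nsmul_eq_mul]

theorem abs_sum_abs_mul_weight_sub_le (hζ : ζ ∈ Icc (-1 : ℝ) 1) :
    |(∑ ξ ∈ cube N, |∑ i, ξ i| * weight N ζ ξ - N * |ζ|)| ≤ √N := by
  have hw := weight_nonneg (N := N) hζ
  calc |(∑ ξ ∈ cube N, |∑ i, ξ i| * weight N ζ ξ - N * |ζ|)|
      = |∑ ξ ∈ cube N, (|∑ i, ξ i| - |N * ζ|) * weight N ζ ξ| := by
        rw [Finset.sum_congr rfl fun ξ _ => sub_mul _ _ _, Finset.sum_sub_distrib,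
          ← Finset.mul_sum, sum_weight, mul_one, abs_mul, Nat.abs_cast]
    _ ≤ ∑ ξ ∈ cube N, |∑ i, ξ i - N * ζ| * weight N ζ ξ := by
        refine (Finset.abs_sum_le_sum_abs _ _).trans (Finset.sum_le_sum fun ξ _ => ?_)
        rw [abs_mul, abs_of_nonneg (hw ξ)]
        exact mul_le_mul_of_nonneg_right (abs_abs_sub_abs_le_abs_sub _ _) (hw ξ)
    _ ≤ √(N * (1 - ζ ^ 2)) := by
        rw [← sum_sq_sub_mul_weight]
        exact sum_abs_mul_le_sqrt_sum_sq_mul (fun ξ _ => hw ξ) (sum_weight N ζ)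
    _ ≤ √N := Real.sqrt_le_sqrt (by nlinarith [sq_nonneg ζ, (N.cast_nonneg : (0 : ℝ) ≤ N)])

theorem integral_eq_integral_sum_mul_weight (μ : Measure ℝ) [IsProbabilityMeasure μ]
    (hμ : ∀ᵐ ζ ∂μ, ζ ∈ Icc (-1 : ℝ) 1)
    (P : Measure (Fin N → ℝ)) [IsProbabilityMeasure P]
    (hP : ∀ ξ : Fin N → ℝ, (∀ i, ξ i = 1 ∨ ξ i = -1) →
      (P {ξ}).toReal = ∫ ζ, ∏ i, (if ξ i = 1 then (1 + ζ) / 2 else (1 - ζ) / 2) ∂μ)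
    (f : (Fin N → ℝ) → ℝ) :
    ∫ x, f x ∂P = ∫ ζ, ∑ ξ ∈ cube N, f ξ * weight N ζ ξ ∂μ := by
  have hPξ : ∀ ξ ∈ cube N, P.real {ξ} = ∫ ζ, weight N ζ ξ ∂μ :=
    fun ξ hξ => hP ξ (mem_cube.1 hξ)
  have hint : ∀ ξ, Integrable (fun ζ => weight N ζ ξ) μ :=
    fun ξ => (continuous_weight ξ).integrable_of_ae_mem_Icc hμ
  have hmass : ∑ ξ ∈ cube N, P.real {ξ} = 1 := by
    rw [Finset.sum_congr rfl hPξ, ← integral_finsetSum _ fun ξ _ => hint ξ]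
    simp [sum_weight]
  rw [integral_eq_sum_of_sum_measureReal_singleton hmass,
    integral_finsetSum _ fun ξ _ => (hint ξ).const_mul (f ξ)]
  refine Finset.sum_congr rfl fun ξ hξ => ?_
  rw [hPξ ξ hξ, smul_eq_mul, mul_comm, integral_const_mul]

theorem abs_integral_abs_sum_sub_le (μ : Measure ℝ) [IsProbabilityMeasure μ]
    (hμ : ∀ᵐ ζ ∂μ, ζ ∈ Icc (-1 : ℝ) 1)
    (P : Measure (Fin N → ℝ)) [IsProbabilityMeasure P]
    (hP : ∀ ξ : Fin N → ℝ, (∀ i, ξ i = 1 ∨ ξ i = -1) →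
      (P {ξ}).toReal = ∫ ζ, ∏ i, (if ξ i = 1 then (1 + ζ) / 2 else (1 - ζ) / 2) ∂μ) :
    |∫ x, |∑ i, x i| ∂P - N * ∫ ζ, |ζ| ∂μ| ≤ √N := by
  have hcond : Integrable (fun ζ => ∑ ξ ∈ cube N, |∑ i, ξ i| * weight N ζ ξ) μ :=
    (continuous_finsetSum _ fun ξ _ =>
      continuous_const.mul (continuous_weight ξ)).integrable_of_ae_mem_Icc hμ
  have habs : Integrable (fun ζ : ℝ => N * |ζ|) μ :=
    (continuous_const.mul continuous_abs).integrable_of_ae_mem_Icc hμ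
  rw [integral_eq_integral_sum_mul_weight μ hμ P hP, ← integral_const_mul,
    ← integral_sub hcond habs, ← Real.norm_eq_abs]
  have hbound : ∀ᵐ ζ ∂μ, ‖∑ ξ ∈ cube N, |∑ i, ξ i| * weight N ζ ξ - N * |ζ|‖ ≤ √N := by
    filter_upwards [hμ] with ζ hζ
    exact abs_sum_abs_mul_weight_sub_le hζ
  calc _ ≤ √N * μ.real univ := norm_integral_le_of_norm_le_const hbound
    _ = √N := by simp

end CommonBelief

theorem tendsto_sqrt_mul_atTop_of_rpow_le {m : ℕ → ℝ}
    (hm : ∃ C > (0 : ℝ), ∃ ε > (0 : ℝ), ∀ᶠ N : ℕ in atTop, C * (N : ℝ) ^ (ε - 1 / 2) ≤ m N) :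
    Tendsto (fun N : ℕ => √N * m N) atTop atTop := by
  obtain ⟨C, hC, ε, hε, hle⟩ := hm
  have hpow : Tendsto (fun N : ℕ => C * (N : ℝ) ^ ε) atTop atTop :=
    ((tendsto_rpow_atTop hε).comp tendsto_natCast_atTop_atTop).const_mul_atTop hC
  refine tendsto_atTop_mono' atTop ?_ hpow
  filter_upwards [hle, eventually_gt_atTop 0] with N hN hNpos
  have hNpos' : (0 : ℝ) < N := by exact_mod_cast hNpos
  calc C * (N : ℝ) ^ ε = √N * (C * (N : ℝ) ^ (ε - 1 / 2)) := by
        rw [Real.sqrt_eq_rpow, mul_left_comm, ← Real.rpow_add hNpos']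
        ring_nf
    _ ≤ √N * m N := by gcongr

open CommonBelief in
/-- In the common belief model with belief measures μ_N, if
μ̄_N = ∫|ζ|dμ_N ≥ C·N^(ε−1/2) for some C, ε > 0 and all large N, then the
expected margin satisfies E[|Σ X_i|] / (N·μ̄_N) → 1 as N → ∞. -/
theorem common_belief_margin_asymptotics_large_mubar
    (μs : ℕ → Measure ℝ) [∀ N, IsProbabilityMeasure (μs N)]
    (hμsupp : ∀ N, ∀ᵐ ζ ∂(μs N), ζ ∈ Set.Icc (-1 : ℝ) 1)
    (P : (N : ℕ) → Measure (Fin N → ℝ)) [∀ N, IsProbabilityMeasure (P N)]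
    (hP : ∀ N, ∀ ξ : Fin N → ℝ, (∀ i, ξ i = 1 ∨ ξ i = -1) →
      ((P N) {ξ}).toReal
        = ∫ ζ, ∏ i, (if ξ i = 1 then (1 + ζ) / 2 else (1 - ζ) / 2) ∂(μs N))
    (hlower : ∃ C > (0 : ℝ), ∃ ε > (0 : ℝ), ∀ᶠ N : ℕ in atTop,
      C * (N : ℝ) ^ (ε - 1 / 2) ≤ ∫ ζ, |ζ| ∂(μs N)) :
    Tendsto (fun N : ℕ =>
        (∫ x, |∑ i, x i| ∂(P N)) / ((N : ℝ) * ∫ ζ, |ζ| ∂(μs N)))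
      atTop (nhds 1) := by
  have hgrowth := tendsto_sqrt_mul_atTop_of_rpow_le hlower
  have hpos : ∀ᶠ N : ℕ in atTop, 0 < (N : ℝ) ∧ 0 < ∫ ζ, |ζ| ∂(μs N) := by
    filter_upwards [hgrowth.eventually_gt_atTop 0] with N hN
    have hm : 0 ≤ ∫ ζ, |ζ| ∂(μs N) := integral_nonneg fun ζ => abs_nonneg ζ
    exact ⟨Real.sqrt_pos.1 (pos_of_mul_pos_left hN hm),
      pos_of_mul_pos_right hN (Real.sqrt_nonneg _)⟩
  refine tendsto_div_nhds_one_of_abs_sub_le (e := fun N => √N)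
    (Eventually.of_forall fun N => abs_integral_abs_sum_sub_le (μs N) (hμsupp N) (P N) (hP N))
    ?_ (hgrowth.inv_tendsto_atTop.congr' ?_)
  · filter_upwards [hpos] with N hN
    exact mul_pos hN.1 hN.2
  · filter_upwards [hpos] with N ⟨hN, hm⟩
    simp only [Pi.inv_apply]
    field_simp
    rw [Real.sq_sqrt hN.le]
end

section
/- For J > 1, the equation tanh(J·C) = C has a unique positive solution C(J), and for 0 ≤ J ≤ 1 the equation tanh(J·C) = C has no positive solution. -/
/-!
Since `tanh 0 = 0`, a positive `C` solves `tanh (J * C) = C` exactly when the secant slope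
`tanh x / x` of `tanh` from `0` equals `1 / J` at `x = J * C`. Strict concavity of `tanh` on
`[0, ∞)` makes this slope strictly decreasing, and `tanh' 0 = 1` keeps it below `1`: this gives
uniqueness and rules out `J ≤ 1`. For `J > 1`, `tanh (J * x) - x` is positive just right of `0`
(its derivative there is `J - 1`) and negative at `x = 1`, so a solution exists by the
intermediate value theorem.
-/

open Real Set Filter Topology

theorem StrictConcaveOn.strictAntiOn_slope {𝕜 : Type*} [Field 𝕜] [LinearOrder 𝕜]
    [IsStrictOrderedRing 𝕜] {s : Set 𝕜} {f : 𝕜 → 𝕜} {a : 𝕜} (hf : StrictConcaveOn 𝕜 s f)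
    (ha : a ∈ s) : StrictAntiOn (slope f a) (s \ {a}) := by
  intro x hx y hy hxy
  simpa only [slope_def_field] using hf.secant_strict_mono ha hx.1 hy.1 hx.2 hy.2 hxy

theorem StrictConcaveOn.eq_of_map_mul_eq_self {f : ℝ → ℝ} {J x y : ℝ}
    (hf : StrictConcaveOn ℝ (Ici 0) f) (hf0 : f 0 = 0) (hJ : 0 < J) (hx : 0 < x) (hy : 0 < y)
    (hfx : f (J * x) = x) (hfy : f (J * y) = y) : x = y := by
  have hmem : ∀ {z : ℝ}, 0 < z → J * z ∈ Ici (0 : ℝ) \ {0} := fun hz =>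
    ⟨(mul_pos hJ hz).le, (mul_pos hJ hz).ne'⟩
  have hslope : ∀ {z : ℝ}, 0 < z → f (J * z) = z → slope f 0 (J * z) = J⁻¹ := fun hz hfz => by
    rw [slope_def_field, hfz, hf0, sub_zero, sub_zero, div_mul_cancel_right₀ hz.ne']
  have hJxy : J * x = J * y := (hf.strictAntiOn_slope self_mem_Ici).injOn (hmem hx) (hmem hy) <| by
    rw [hslope hx hfx, hslope hy hfy]
  exact mul_left_cancel₀ hJ.ne' hJxy

theorem exists_pos_map_eq_self_of_one_lt_deriv {f : ℝ → ℝ} {f' b : ℝ}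
    (hf : ContinuousOn f (Icc 0 b)) (hf0 : f 0 = 0) (hf' : HasDerivWithinAt f f' (Ioi 0) 0)
    (h1 : 1 < f') (hb0 : 0 < b) (hb : f b < b) : ∃ x, 0 < x ∧ f x = x := by
  have hslope : ∀ᶠ a in 𝓝[>] 0, 1 < slope f 0 a ∧ a ∈ Ioo 0 b := by
    have hlim := (hasDerivWithinAt_iff_tendsto_slope' (lt_irrefl 0)).1 hf'
    exact (hlim.eventually (lt_mem_nhds h1)).and (Ioo_mem_nhdsGT hb0)
  obtain ⟨a, ha1, ha, hab⟩ := hslope.exists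
  have hfa : a < f a := by
    rwa [slope_def_field, hf0, sub_zero, sub_zero, one_lt_div ha] at ha1
  obtain ⟨x, hx, hfx⟩ := intermediate_value_Icc' hab.le (f := fun x => f x - x)
    ((hf.mono (Icc_subset_Icc ha.le le_rfl)).sub continuousOn_id)
    (show (0 : ℝ) ∈ Icc (f b - b) (f a - a) from ⟨by linarith, by linarith⟩)
  exact ⟨x, ha.trans_le hx.1, sub_eq_zero.1 hfx⟩

namespace Real

theorem hasDerivAt_tanh (x : ℝ) : HasDerivAt tanh (cosh x ^ 2)⁻¹ x := by
  have htanh : tanh = fun y => sinh y / cosh y := funext fun y => tanh_eq_sinh_div_cosh y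
  rw [htanh]
  refine ((hasDerivAt_sinh x).div (hasDerivAt_cosh x) (cosh_pos x).ne').congr_deriv ?_
  rw [← sq, ← sq, cosh_sq_sub_sinh_sq, one_div]

theorem continuous_tanh : Continuous tanh :=
  continuous_iff_continuousAt.2 fun x => (hasDerivAt_tanh x).continuousAt

theorem strictConcaveOn_tanh : StrictConcaveOn ℝ (Ici 0) tanh := by
  have hderiv : deriv tanh = fun x => (cosh x ^ 2)⁻¹ := funext fun x => (hasDerivAt_tanh x).deriv
  refine StrictAntiOn.strictConcaveOn_of_deriv (convex_Ici 0) continuous_tanh.continuousOn ?_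
  rw [hderiv, interior_Ici]
  intro x hx y hy hxy
  have hcosh : cosh x < cosh y := by
    rwa [cosh_lt_cosh, abs_of_pos hx, abs_of_pos hy]
  exact inv_strictAnti₀ (by positivity) (pow_lt_pow_left₀ hcosh (cosh_pos x).le two_ne_zero)

theorem tanh_lt_self {x : ℝ} (hx : 0 < x) : tanh x < x := by
  have hslope :=
    strictConcaveOn_tanh.slope_lt_of_hasDerivAt self_mem_Ici hx.le hx (hasDerivAt_tanh 0)
  rwa [slope_def_field, tanh_zero, sub_zero, sub_zero, cosh_zero, one_pow, inv_one,
    div_lt_one hx] at hslope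

theorem tanh_mul_lt_self {J x : ℝ} (hJ0 : 0 ≤ J) (hJ1 : J ≤ 1) (hx : 0 < x) : tanh (J * x) < x := by
  rcases hJ0.eq_or_lt with rfl | hJ
  · rwa [zero_mul, tanh_zero]
  · exact (tanh_lt_self (mul_pos hJ hx)).trans_le (mul_le_of_le_one_left hx.le hJ1)

end Real

/-- Mean-field fixed point equation: for J > 1, tanh(J·C) = C has a unique
positive solution; for 0 ≤ J ≤ 1 it has no positive solution. -/
theorem curie_weiss_fixed_point (J : ℝ) :
    (1 < J → ∃! C : ℝ, 0 < C ∧ Real.tanh (J * C) = C) ∧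
    (0 ≤ J → J ≤ 1 → ∀ C : ℝ, 0 < C → Real.tanh (J * C) ≠ C) := by
  refine ⟨fun hJ => ?_, fun hJ0 hJ1 C hC => (tanh_mul_lt_self hJ0 hJ1 hC).ne⟩
  have hderiv : HasDerivAt (fun x => tanh (J * x)) J 0 := by
    simpa [Function.comp_def] using
      (hasDerivAt_tanh (J * 0)).comp 0 ((hasDerivAt_id 0).const_mul J)
  obtain ⟨C, hC, hCfix⟩ := exists_pos_map_eq_self_of_one_lt_deriv
    (continuous_tanh.comp (continuous_const_mul J)).continuousOn (by simp)
    hderiv.hasDerivWithinAt hJ one_pos (by simpa using tanh_lt_one J)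
  exact ⟨C, ⟨hC, hCfix⟩, fun y ⟨hy, hyfix⟩ =>
    strictConcaveOn_tanh.eq_of_map_mul_eq_self tanh_zero (by linarith) hy hC hyfix hCfix⟩
end

section
/- Let E_0 denote expectation for N i.i.d. symmetric ±1 random variables X_i, and for 0 < J < 1 define Z_{J,N} = E_0[exp((J/2)·(N^{-1/2}·Σ X_i)²)]. Then Z_{J,N} → 1/√(1-J) as N → ∞. -/
open MeasureTheory ProbabilityTheory Filter Real Topology

/-!
The Hubbard–Stratonovich identity `exp (s ^ 2 / 2) = E[exp (s G)]`, for `G` standard Gaussian,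
linearises the exponent: applied to `s = √J S_N / √N` and combined with Fubini it gives
`Z_{J,N} = E[cosh (√J G / √N) ^ N]`, because the moment generating function of a sum of `N`
independent symmetric signs is `cosh ^ N`. Since `cosh (x / √N) ^ N ≤ exp (x ^ 2 / 2)` with
convergence as `N → ∞`, and `E[exp (J G ^ 2 / 2)] = 1 / √(1 - J)` is finite for `J < 1`,
dominated convergence concludes.
-/

lemma integral_exp_mul_gaussianReal (c : ℝ) :
    ∫ t, exp (c * t) ∂gaussianReal 0 1 = exp (c ^ 2 / 2) := by
  simpa [mgf] using congrFun (mgf_id_gaussianReal (μ := 0) (v := 1)) c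

lemma gaussianPDFReal_zero_one_mul_exp (c t : ℝ) :
    gaussianPDFReal 0 1 t * exp (c * t ^ 2 / 2) = (√(2 * π))⁻¹ * exp (-((1 - c) / 2) * t ^ 2) := by
  rw [gaussianPDFReal, mul_assoc, ← exp_add]
  simp only [NNReal.coe_one, mul_one, sub_zero]
  ring_nf

lemma integrable_exp_mul_sq_gaussianReal {c : ℝ} (hc : c < 1) :
    Integrable (fun t ↦ exp (c * t ^ 2 / 2)) (gaussianReal 0 1) := by
  rw [gaussianReal_of_var_ne_zero _ one_ne_zero, integrable_withDensity_iff_integrable_smul'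
    (measurable_gaussianPDF 0 1) (ae_of_all _ fun _ ↦ gaussianPDF_lt_top)]
  simp_rw [toReal_gaussianPDF, smul_eq_mul, gaussianPDFReal_zero_one_mul_exp]
  exact (integrable_exp_neg_mul_sq (by linarith)).const_mul _

lemma integral_exp_mul_sq_gaussianReal {c : ℝ} (hc : c < 1) :
    ∫ t, exp (c * t ^ 2 / 2) ∂gaussianReal 0 1 = 1 / √(1 - c) := by
  have h1c : 0 < 1 - c := by linarith
  simp_rw [integral_gaussianReal_eq_integral_smul one_ne_zero, smul_eq_mul,
    gaussianPDFReal_zero_one_mul_exp, integral_const_mul, integral_gaussian,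
    div_div_eq_mul_div, sqrt_div' _ h1c.le]
  have : 0 < √(2 * π) := by positivity
  field_simp

theorem integral_exp_sq_half_eq_integral_mgf {Ω : Type*} [MeasurableSpace Ω] {μ : Measure Ω}
    [SFinite μ] {S : Ω → ℝ} (hS : AEMeasurable S μ)
    (hint : Integrable (fun ω ↦ exp (S ω ^ 2 / 2)) μ) :
    ∫ ω, exp (S ω ^ 2 / 2) ∂μ = ∫ t, mgf S μ t ∂gaussianReal 0 1 := by
  have hF : ∀ ω, ∫ t, exp (t * S ω) ∂gaussianReal 0 1 = exp (S ω ^ 2 / 2) := fun ω ↦ by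
    simp_rw [mul_comm _ (S ω)]
    exact integral_exp_mul_gaussianReal (S ω)
  have hFint : Integrable (fun p : Ω × ℝ ↦ exp (p.2 * S p.1)) (μ.prod (gaussianReal 0 1)) := by
    refine (integrable_prod_iff (by fun_prop)).2 ⟨ae_of_all _ fun ω ↦ ?_, ?_⟩
    · simp_rw [mul_comm _ (S ω)]
      exact integrable_exp_mul_gaussianReal (S ω)
    · simpa [Real.norm_eq_abs, abs_of_pos (exp_pos _), hF] using hint
  calc ∫ ω, exp (S ω ^ 2 / 2) ∂μ = ∫ ω, ∫ t, exp (t * S ω) ∂gaussianReal 0 1 ∂μ := by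
        simp_rw [hF]
    _ = ∫ t, mgf S μ t ∂gaussianReal 0 1 := integral_integral_swap hFint

lemma integrable_exp_sq_half_of_ae_abs_le {Ω : Type*} [MeasurableSpace Ω] {μ : Measure Ω}
    [IsFiniteMeasure μ] {S : Ω → ℝ} (hS : AEMeasurable S μ) {C : ℝ} (hC : ∀ᵐ ω ∂μ, |S ω| ≤ C) :
    Integrable (fun ω ↦ exp (S ω ^ 2 / 2)) μ := by
  refine .of_bound (by fun_prop) (exp (C ^ 2 / 2)) ?_
  filter_upwards [hC] with ω hω
  rw [norm_of_nonneg (exp_pos _).le, exp_le_exp]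
  have := sq_le_sq' (neg_le_of_abs_le hω) (le_of_abs_le hω)
  linarith

noncomputable def rademacher : Measure ℝ :=
  ((1 : ENNReal) / 2) • (Measure.dirac (1 : ℝ) + Measure.dirac (-1 : ℝ))

lemma mgf_id_rademacher (t : ℝ) : mgf id rademacher t = cosh t := by
  rw [mgf, rademacher, integral_smul_measure, integral_add_measure
    (integrable_dirac (by simp)) (integrable_dirac (by simp)), integral_dirac, integral_dirac,
    cosh_eq]
  simp only [one_div, ENNReal.toReal_inv, ENNReal.toReal_ofNat, id_eq, mul_one, mul_neg,
    smul_eq_mul]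
  ring

lemma ae_abs_le_one_rademacher : ∀ᵐ x ∂rademacher, |x| ≤ 1 := by
  refine Measure.ae_smul_measure ?_ _
  rw [ae_add_measure_iff, ae_dirac_iff (measurableSet_le (by fun_prop) (by fun_prop)),
    ae_dirac_iff (measurableSet_le (by fun_prop) (by fun_prop))]
  norm_num

section Rademacher

variable {Ω ι : Type*} [MeasurableSpace Ω] {P : Measure Ω}

lemma mgf_eq_cosh_of_map_eq_rademacher {Y : Ω → ℝ} (hY : AEMeasurable Y P)
    (h : P.map Y = rademacher) (t : ℝ) : mgf Y P t = cosh t := by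
  rw [← mgf_id_map hY, h, mgf_id_rademacher]

lemma ae_abs_le_one_of_map_eq_rademacher {Y : Ω → ℝ} (hY : AEMeasurable Y P)
    (h : P.map Y = rademacher) : ∀ᵐ ω ∂P, |Y ω| ≤ 1 :=
  ae_of_ae_map hY (h ▸ ae_abs_le_one_rademacher)

variable {X : ι → Ω → ℝ}

lemma ae_abs_sum_le_card_of_map_eq_rademacher (hX : ∀ i, AEMeasurable (X i) P)
    (hdist : ∀ i, P.map (X i) = rademacher) (s : Finset ι) :
    ∀ᵐ ω ∂P, |∑ i ∈ s, X i ω| ≤ s.card := by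
  have h : ∀ᵐ ω ∂P, ∀ i ∈ s, |X i ω| ≤ 1 := (ae_ball_iff s.countable_toSet).2
    fun i _ ↦ ae_abs_le_one_of_map_eq_rademacher (hX i) (hdist i)
  filter_upwards [h] with ω hω
  calc |∑ i ∈ s, X i ω| ≤ ∑ i ∈ s, |X i ω| := Finset.abs_sum_le_sum_abs _ _
    _ ≤ ∑ _i ∈ s, 1 := Finset.sum_le_sum hω
    _ = s.card := by simp

lemma mgf_const_mul_sum_of_map_eq_rademacher (hindep : iIndepFun X P)
    (hX : ∀ i, Measurable (X i)) (hdist : ∀ i, P.map (X i) = rademacher) (s : Finset ι)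
    (a t : ℝ) : mgf (fun ω ↦ a * ∑ i ∈ s, X i ω) P t = cosh (a * t) ^ s.card := by
  simp_rw [← Finset.sum_apply]
  rw [mgf_const_mul, hindep.mgf_sum hX, Finset.prod_congr rfl fun i _ ↦
    mgf_eq_cosh_of_map_eq_rademacher (hX i).aemeasurable (hdist i) _, Finset.prod_const]

end Rademacher

lemma one_add_sq_half_le_cosh (x : ℝ) : 1 + x ^ 2 / 2 ≤ cosh x := by
  have h := sum_le_hasSum ({0, 1} : Finset ℕ)
    (fun i _ ↦ div_nonneg ((even_two_mul i).pow_nonneg x) (by positivity)) (hasSum_cosh x)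
  simpa [Finset.sum_pair, Nat.factorial] using h

lemma cosh_div_sqrt_pow_le (x : ℝ) (N : ℕ) : cosh (x / √N) ^ N ≤ exp (x ^ 2 / 2) := by
  rcases N.eq_zero_or_pos with rfl | hN
  · simpa using one_le_exp (by positivity)
  calc cosh (x / √N) ^ N ≤ exp ((x / √N) ^ 2 / 2) ^ N :=
        pow_le_pow_left₀ (cosh_pos _).le (cosh_le_exp_half_sq _) N
    _ = exp (x ^ 2 / 2) := by
        rw [← exp_nat_mul, div_pow, sq_sqrt (Nat.cast_nonneg N)]
        field_simp

lemma tendsto_cosh_div_sqrt_pow (x : ℝ) :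
    Tendsto (fun N : ℕ ↦ cosh (x / √N) ^ N) atTop (𝓝 (exp (x ^ 2 / 2))) := by
  refine tendsto_of_tendsto_of_tendsto_of_le_of_le' (tendsto_one_add_div_pow_exp (x ^ 2 / 2))
    tendsto_const_nhds ?_ (Eventually.of_forall (cosh_div_sqrt_pow_le x))
  filter_upwards [eventually_gt_atTop 0] with N hN
  calc (1 + x ^ 2 / 2 / N) ^ N = (1 + (x / √N) ^ 2 / 2) ^ N := by
        rw [div_pow, sq_sqrt (Nat.cast_nonneg N)]; ring
    _ ≤ cosh (x / √N) ^ N := pow_le_pow_left₀ (by positivity) (one_add_sq_half_le_cosh _) N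

lemma tendsto_integral_cosh_div_sqrt_pow_gaussianReal {a : ℝ} (ha : a ^ 2 < 1) :
    Tendsto (fun N : ℕ ↦ ∫ t, cosh (a * t / √N) ^ N ∂gaussianReal 0 1) atTop
      (𝓝 (1 / √(1 - a ^ 2))) := by
  have hsq : ∀ t : ℝ, (a * t) ^ 2 / 2 = a ^ 2 * t ^ 2 / 2 := fun t ↦ by ring
  rw [← integral_exp_mul_sq_gaussianReal ha]
  refine tendsto_integral_of_dominated_convergence (fun t ↦ exp (a ^ 2 * t ^ 2 / 2))
    (fun N ↦ by fun_prop) (integrable_exp_mul_sq_gaussianReal ha) (fun N ↦ ae_of_all _ fun t ↦ ?_)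
    (ae_of_all _ fun t ↦ ?_)
  · rw [norm_of_nonneg (by positivity), ← hsq]
    exact cosh_div_sqrt_pow_le _ N
  · simpa only [hsq] using tendsto_cosh_div_sqrt_pow (a * t)

lemma integral_exp_sq_sum_div_sqrt_eq_integral_cosh_pow {Ω : Type*} [MeasurableSpace Ω]
    {P : Measure Ω} [IsProbabilityMeasure P] {X : ℕ → Ω → ℝ} (hmeas : ∀ i, Measurable (X i))
    (hindep : iIndepFun X P) (hdist : ∀ i, P.map (X i) = rademacher) {J : ℝ} (hJ : 0 ≤ J)
    (N : ℕ) :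
    ∫ ω, exp ((J / 2) * ((∑ i ∈ Finset.range N, X i ω) / √N) ^ 2) ∂P
      = ∫ t, cosh (√J * t / √N) ^ N ∂gaussianReal 0 1 := by
  set S : Ω → ℝ := fun ω ↦ √J / √N * ∑ i ∈ Finset.range N, X i ω
  have hS : AEMeasurable S P := by fun_prop
  have hbound : ∀ᵐ ω ∂P, |S ω| ≤ √J / √N * N := by
    filter_upwards [ae_abs_sum_le_card_of_map_eq_rademacher (fun i ↦ (hmeas i).aemeasurable)
      hdist (Finset.range N)] with ω hω
    rw [Finset.card_range] at hω
    rw [abs_mul, abs_of_nonneg (by positivity)]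
    gcongr
  calc ∫ ω, exp ((J / 2) * ((∑ i ∈ Finset.range N, X i ω) / √N) ^ 2) ∂P
      = ∫ ω, exp (S ω ^ 2 / 2) ∂P := by
        congr! 3 with ω
        rw [← sq_sqrt hJ]; ring
    _ = ∫ t, mgf S P t ∂gaussianReal 0 1 :=
        integral_exp_sq_half_eq_integral_mgf hS (integrable_exp_sq_half_of_ae_abs_le hS hbound)
    _ = ∫ t, cosh (√J * t / √N) ^ N ∂gaussianReal 0 1 := by
        congr! 2 with t
        rw [mgf_const_mul_sum_of_map_eq_rademacher hindep hmeas hdist, Finset.card_range]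
        ring_nf

/-- Subcritical Curie–Weiss partition function asymptotics: for i.i.d. symmetric
±1 random variables and 0 < J < 1,
Z_{J,N} = E[exp((J/2)·(N^{-1/2}·Σ X_i)²)] → 1/√(1-J). -/
theorem curie_weiss_partition_function_limit
    {Ω : Type*} [MeasurableSpace Ω] (P : Measure Ω) [IsProbabilityMeasure P]
    (X : ℕ → Ω → ℝ) (hmeas : ∀ i, Measurable (X i))
    (hindep : iIndepFun X P)
    (hdist : ∀ i, Measure.map (X i) P
      = ((1 : ENNReal) / 2) • (Measure.dirac (1 : ℝ) + Measure.dirac (-1 : ℝ)))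
    (J : ℝ) (hJ0 : 0 < J) (hJ1 : J < 1) :
    Tendsto (fun N : ℕ =>
        ∫ ω, Real.exp ((J / 2) * ((∑ i ∈ Finset.range N, X i ω) / Real.sqrt N) ^ 2) ∂P)
      atTop (nhds (1 / Real.sqrt (1 - J))) := by
  have hJ : √J ^ 2 = J := sq_sqrt hJ0.le
  simpa only [integral_exp_sq_sum_div_sqrt_eq_integral_cosh_pow hmeas hindep hdist hJ0.le, hJ]
    using tendsto_integral_cosh_div_sqrt_pow_gaussianReal (a := √J) (by linarith)
end
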